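/- arXiv:1308.3987 — 8 statements merged into one kernel-verified Lean document; each statement's English description precedes it below -/
import Mathlib

section
/- Let G be a connected graph that is δ-hyperbolic, let r be a nonnegative integer, and let x, y, z be vertices of G with d(y,z) ≤ d(x,z) and d(x,y) ≤ 2r. Then for any vertex c ∈ I(x,z) with d(x,c) = min{r, d(x,z)}, the inequality d(c,y) ≤ r + 2δ holds. -/
open SimpleGraph

variable {V : Type*}

/-- The ball of (real) radius `r` around `v` in `G` (w.r.t. the graph distance). -/
def gBall (G : SimpleGraph V) (v : V) (r : ℝ) : Set V :=
  {x : V | (G.dist v x : ℝ) ≤ r}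

/-- The interval `I(u,v)`: vertices lying on shortest `(u,v)`-paths. -/
def gInterval (G : SimpleGraph V) (u v : V) : Set V :=
  {x : V | G.dist u x + G.dist x v = G.dist u v}

/-- Gromov `δ`-hyperbolicity via the four-point condition. -/
def IsHyperbolic {W : Type*} (G : SimpleGraph W) (δ : ℝ) : Prop :=
  ∀ u v x y : W,
    (G.dist u v : ℝ) + (G.dist x y : ℝ) ≤
      max ((G.dist u x : ℝ) + (G.dist v y : ℝ)) ((G.dist u y : ℝ) + (G.dist v x : ℝ)) + 2 * δ

/-- `(s,s')*`-dismantlability: there is a well-order `lt` on the vertices such that every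
vertex `v` which is not the least element is eliminated by some earlier vertex `u`,
i.e. `B_s(v) ∩ X_v ⊆ B_{s'}(u)` where `X_v = {w : w ⪯ v}`. -/
def StarDismantlable (G : SimpleGraph V) (s s' : ℝ) : Prop :=
  ∃ lt : V → V → Prop, IsWellOrder V lt ∧
    ∀ v : V, (∃ w : V, lt w v) →
      ∃ u : V, lt u v ∧ gBall G v s ∩ {w : V | lt w v ∨ w = v} ⊆ gBall G u s'

/-- The ball of radius `r` around `v` in the subgraph of `G` induced on `V \ {u}`. -/
def gBallRemove (G : SimpleGraph V) (u v : V) (r : ℝ) : Set V :=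
  {x : V | ∃ (hv : v ∈ {w : V | w ≠ u}) (hx : x ∈ {w : V | w ≠ u}),
    (G.induce {w : V | w ≠ u}).Reachable ⟨v, hv⟩ ⟨x, hx⟩ ∧
    ((G.induce {w : V | w ≠ u}).dist ⟨v, hv⟩ ⟨x, hx⟩ : ℝ) ≤ r}

/-- `(s,s')`-dismantlability: there is a well-order `lt` on the vertices such that every
vertex `v` which is not the least element is eliminated by an earlier vertex `u`, i.e.
`B_s(v, G−u) ∩ X_v ⊆ B_{s'}(u)`. -/
def Dismantlable (G : SimpleGraph V) (s s' : ℝ) : Prop :=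
  ∃ lt : V → V → Prop, IsWellOrder V lt ∧
    ∀ v : V, (∃ w : V, lt w v) →
      ∃ u : V, lt u v ∧ gBallRemove G u v s ∩ {w : V | lt w v ∨ w = v} ⊆ gBall G u s'

/-- Weak modularity: the triangle and quadrangle conditions. -/
def WeaklyModular (G : SimpleGraph V) : Prop :=
  (∀ u v w : V, G.dist v w = 1 → 1 < G.dist u v → G.dist u v = G.dist u w →
    ∃ x : V, G.Adj v x ∧ G.Adj w x ∧ G.dist u x + 1 = G.dist u v) ∧
  (∀ u v w z : V, G.dist v z = 1 → G.dist w z = 1 → G.dist v w = 2 →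
    2 ≤ G.dist u v → G.dist u v = G.dist u w → G.dist u z = G.dist u v + 1 →
    ∃ x : V, G.Adj v x ∧ G.Adj w x ∧ G.dist u x + 1 = G.dist u v)

/-- `u`, `v`, `w` form a metric triangle: the pairwise intervals intersect only in the
common end-vertices. -/
def MetricTriangle (G : SimpleGraph V) (u v w : V) : Prop :=
  gInterval G u v ∩ gInterval G v w = {v} ∧
  gInterval G v w ∩ gInterval G w u = {w} ∧
  gInterval G w u ∩ gInterval G u v = {u}

theorem statement0 (V : Type*) (G : SimpleGraph V) (hG : G.Connected)
    (δ : ℝ) (hδ : 0 ≤ δ) (hhyp : IsHyperbolic G δ) (r : ℕ)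
    (x y z c : V)
    (hyz : G.dist y z ≤ G.dist x z) (hxy : G.dist x y ≤ 2 * r)
    (hc : c ∈ gInterval G x z) (hxc : G.dist x c = min r (G.dist x z)) :
    (G.dist c y : ℝ) ≤ r + 2 * δ := by
  have hc' : G.dist x c + G.dist c z = G.dist x z := hc
  rcases le_or_gt (G.dist x z) r with h | h
  · -- then c = z
    have hmin : min r (G.dist x z) = G.dist x z := min_eq_right h
    have hcz : G.dist c z = 0 := by omega
    have : c = z := hG.dist_eq_zero_iff.mp hcz
    subst this
    have : G.dist c y ≤ r := by
      rw [SimpleGraph.dist_comm] at hyz; omega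
    have h2 : (G.dist c y : ℝ) ≤ r := by exact_mod_cast this
    linarith
  · have hxc' : G.dist x c = r := by
      rw [hxc, min_eq_left (by omega)]
    have H := hhyp c y x z
    have e1 : (G.dist c x : ℝ) = G.dist x c := by exact_mod_cast congrArg (Nat.cast : ℕ → ℝ) (SimpleGraph.dist_comm (u:=c) (v:=x))
    have e2 : (G.dist c z : ℝ) = (G.dist x z : ℝ) - r := by push_cast [← hc', hxc']; ring
    have e3 : (G.dist y x : ℝ) ≤ 2 * r := by
      rw [show G.dist y x = G.dist x y from SimpleGraph.dist_comm]; exact_mod_cast hxy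
    have e4 : (G.dist y z : ℝ) ≤ (G.dist x z : ℝ) := by exact_mod_cast hyz
    have e5 : (G.dist x c : ℝ) = r := by exact_mod_cast hxc'
    rcases max_cases ((G.dist c x : ℝ) + (G.dist y z : ℝ)) ((G.dist c z : ℝ) + (G.dist y x : ℝ)) with ⟨hm, _⟩ | ⟨hm, _⟩ <;>
      rw [hm] at H <;> linarith
end

section
/- Let G be a connected graph that is δ-hyperbolic (δ ≥ 0 real), let v₀ be a vertex of G, and let r be a positive integer with r ≥ δ. Then any well-order ⪯ on the vertex set of G whose least element is v₀ and which satisfies u ⪯ v ⟹ d(v₀,u) ≤ d(v₀,v) (in particular, any breadth-first search order starting at v₀) is a (2r, r+2δ)*-dismantling order of G: every vertex v ≠ v₀ admits a vertex u ≠ v with u ⪯ v and B_{2r}(v) ∩ X_v ⊆ B_{r+2δ}(u), where X_v = {w : w ⪯ v}. -/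
/-!
Let `D = d(v₀, v)`. If `D ≤ r`, the root `v₀` eliminates `v`, since every vertex preceding `v`
is at distance at most `D ≤ r` from `v₀`. Otherwise take `u` on a geodesic from `v₀` to `v` with
`d(u, v) = r`; it precedes `v` because it is closer to `v₀`. For `w ⪯ v` with `d(v, w) ≤ 2r`, the
four-point condition applied to `w, u, v₀, v` gives
`d(w, u) + D ≤ max (d(w, v₀) + r) (d(w, v) + D - r) + 2δ ≤ D + r + 2δ`.
-/

open SimpleGraph

variable {V : Type*}

namespace SimpleGraph

variable {G : SimpleGraph V}

theorem Connected.exists_mem_gInterval_dist_eq (hG : G.Connected) {a b : V} {k : ℕ}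
    (hk : k ≤ G.dist a b) : ∃ u ∈ gInterval G a b, G.dist u b = k := by
  obtain ⟨p, hp⟩ := hG.exists_walk_length_eq_dist a b
  refine ⟨p.getVert (G.dist a b - k), ?_⟩
  have hau : G.dist a (p.getVert (G.dist a b - k)) ≤ G.dist a b - k :=
    (dist_le (p.take _)).trans (by simp [Walk.take_length])
  have hub : G.dist (p.getVert (G.dist a b - k)) b ≤ k :=
    (dist_le (p.drop _)).trans (by simp [Walk.drop_length, hp]; omega)
  have htri := hG.dist_triangle (u := a) (v := p.getVert (G.dist a b - k)) (w := b)
  simp only [gInterval, Set.mem_ofPred_eq]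
  omega

theorem IsHyperbolic.dist_le_of_mem_gInterval {δ : ℝ} (hhyp : IsHyperbolic G δ) {a b u w : V}
    (hu : u ∈ gInterval G a b) (hwa : G.dist a w ≤ G.dist a b)
    (hwb : (G.dist b w : ℝ) ≤ 2 * G.dist u b) :
    (G.dist u w : ℝ) ≤ G.dist u b + 2 * δ := by
  have hu' : (G.dist a u : ℝ) + G.dist u b = G.dist a b := by exact_mod_cast hu
  have hwa' : (G.dist a w : ℝ) ≤ G.dist a b := by exact_mod_cast hwa
  have hfour := hhyp w u a b
  rw [dist_comm (u := w) (v := a), dist_comm (u := w) (v := b), dist_comm (u := w) (v := u),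
    dist_comm (u := u) (v := a)] at hfour
  have hmax : max ((G.dist a w : ℝ) + G.dist u b) ((G.dist b w : ℝ) + G.dist a u) ≤
      G.dist a b + G.dist u b := max_le (by linarith) (by linarith)
  linarith

end SimpleGraph

theorem rel_of_lt_of_rel_imp_le {α β : Type*} [LinearOrder β] {r : α → α → Prop}
    [Std.Trichotomous r] {f : α → β} (hf : ∀ a b, r a b → f a ≤ f b) {a b : α}
    (h : f a < f b) : r a b := by
  rcases trichotomous_of r a b with hab | rfl | hba
  · exact hab
  · exact absurd h (lt_irrefl _)
  · exact absurd (hf b a hba) (not_le.mpr h)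

theorem statement1_general (V : Type*) (G : SimpleGraph V) (hG : G.Connected)
    (δ : ℝ) (hδ : 0 ≤ δ) (hhyp : IsHyperbolic G δ)
    (r : ℕ) (hr : 0 < r)
    (v₀ : V) (lt : V → V → Prop) (hwo : IsWellOrder V lt)
    (hleast : ∀ v : V, v ≠ v₀ → lt v₀ v)
    (hmono : ∀ u v : V, lt u v → G.dist v₀ u ≤ G.dist v₀ v) :
    ∀ v : V, v ≠ v₀ → ∃ u : V, u ≠ v ∧ lt u v ∧
      gBall G v (2 * (r : ℝ)) ∩ {w : V | lt w v ∨ w = v} ⊆ gBall G u ((r : ℝ) + 2 * δ) := by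
  intro v hv
  have hX : ∀ w ∈ {w : V | lt w v ∨ w = v}, G.dist v₀ w ≤ G.dist v₀ v := by
    rintro w (hw | rfl)
    exacts [hmono w v hw, le_rfl]
  rcases le_or_gt (G.dist v₀ v) r with hle | hgt
  · refine ⟨v₀, Ne.symm hv, hleast v hv, fun w ⟨_, hw⟩ => ?_⟩
    have : (G.dist v₀ w : ℝ) ≤ r := by exact_mod_cast (hX w hw).trans hle
    simp only [gBall, Set.mem_ofPred_eq]
    linarith
  · obtain ⟨u, hu, hur⟩ := hG.exists_mem_gInterval_dist_eq hgt.le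
    have hcloser : G.dist v₀ u < G.dist v₀ v := by
      simp only [gInterval, Set.mem_ofPred_eq] at hu
      omega
    refine ⟨u, fun h => (h ▸ hcloser).false, rel_of_lt_of_rel_imp_le hmono hcloser,
      fun w ⟨hwv, hw⟩ => ?_⟩
    simp only [gBall, Set.mem_ofPred_eq] at hwv ⊢
    simpa [hur] using hhyp.dist_le_of_mem_gInterval hu (hX w hw) (by simpa [hur] using hwv)

theorem statement1 (V : Type*) (G : SimpleGraph V) (hG : G.Connected)
    (δ : ℝ) (hδ : 0 ≤ δ) (hhyp : IsHyperbolic G δ)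
    (r : ℕ) (hr : 0 < r) (hrδ : δ ≤ (r : ℝ))
    (v₀ : V) (lt : V → V → Prop) (hwo : IsWellOrder V lt)
    (hleast : ∀ v : V, v ≠ v₀ → lt v₀ v)
    (hmono : ∀ u v : V, lt u v → G.dist v₀ u ≤ G.dist v₀ v) :
    ∀ v : V, v ≠ v₀ → ∃ u : V, u ≠ v ∧ lt u v ∧
      gBall G v (2 * (r : ℝ)) ∩ {w : V | lt w v ∨ w = v} ⊆ gBall G u ((r : ℝ) + 2 * δ) :=
  statement1_general V G hG δ hδ hhyp r hr v₀ lt hwo hleast hmono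
end

section
/- Let G be a connected graph that is (s,s')*-dismantlable for integers 0 < s' < s, and let c = (v₀, v₁, …, v_{n−1}, v₀) be a loop of G of length n > 2(s+s'). Then there exists an index i (taken modulo n) such that d(v_i, v_{(i+2s) mod n}) ≤ 2s'. -/
open SimpleGraph

variable {V : Type*}

theorem statement3 (V : Type*) (G : SimpleGraph V) (hG : G.Connected)
    (s s' : ℕ) (hs' : 0 < s') (hss : s' < s)
    (hd : StarDismantlable G (s : ℝ) (s' : ℝ))
    (n : ℕ) (hn : 2 * (s + s') < n) (v : ZMod n → V)
    (hloop : ∀ i : ZMod n, v i = v (i + 1) ∨ G.Adj (v i) (v (i + 1))) :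
    ∃ i : ZMod n, G.dist (v i) (v (i + ((2 * s : ℕ) : ZMod n))) ≤ 2 * s' := by
  have hn0 : 0 < n := lt_of_le_of_lt (Nat.zero_le _) hn
  haveI : NeZero n := ⟨hn0.ne'⟩
  obtain ⟨lt, hwo, hdis⟩ := hd
  haveI : IsWellOrder V lt := hwo
  -- each step of the loop has distance ≤ 1
  have hstep : ∀ i : ZMod n, G.dist (v i) (v (i + 1)) ≤ 1 := by
    intro i
    rcases hloop i with h | h
    · rw [h, SimpleGraph.dist_self]; exact Nat.zero_le _
    · exact le_of_eq ((SimpleGraph.dist_eq_one_iff_adj).2 h)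
  have hwalk : ∀ (k : ℕ) (i : ZMod n), G.dist (v i) (v (i + (k : ZMod n))) ≤ k := by
    intro k
    induction k with
    | zero => intro i; simp
    | succ k ih =>
      intro i
      have e : i + ((k + 1 : ℕ) : ZMod n) = (i + (k : ZMod n)) + 1 := by
        push_cast; ring
      rw [e]
      calc G.dist (v i) (v (i + (k : ZMod n) + 1))
          ≤ G.dist (v i) (v (i + (k : ZMod n))) +
            G.dist (v (i + (k : ZMod n))) (v (i + (k : ZMod n) + 1)) :=
            hG.dist_triangle
        _ ≤ k + 1 := Nat.add_le_add (ih i) (hstep _)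
  -- a maximal vertex of the loop w.r.t. the well-order
  letI := Classical.decRel lt
  letI : LinearOrder V := linearOrderOfSTO lt
  obtain ⟨m, -, hm⟩ := Finset.exists_max_image Finset.univ v ⟨0, Finset.mem_univ 0⟩
  have hmax : ∀ i : ZMod n, lt (v i) (v m) ∨ v i = v m := by
    intro i
    rcases (hm i (Finset.mem_univ i) : v i = v m ∨ lt (v i) (v m)) with h | h
    · exact Or.inr h
    · exact Or.inl h
  by_cases hle : ∃ w, lt w (v m)
  · obtain ⟨u, hu, hsub⟩ := hdis (v m) hle
    refine ⟨m - ((s : ℕ) : ZMod n), ?_⟩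
    set i := m - ((s : ℕ) : ZMod n) with hi
    have e1 : i + ((s : ℕ) : ZMod n) = m := by rw [hi]; ring
    have h1 : G.dist (v m) (v i) ≤ s := by
      have := hwalk s i
      rw [e1] at this
      rwa [SimpleGraph.dist_comm] at this
    have e2 : i + ((2 * s : ℕ) : ZMod n) = m + ((s : ℕ) : ZMod n) := by
      rw [hi]; push_cast; ring
    have h2 : G.dist (v m) (v (i + ((2 * s : ℕ) : ZMod n))) ≤ s := by
      rw [e2]; exact hwalk s m
    have m1 : v i ∈ gBall G (v m) (s : ℝ) ∩ {w : V | lt w (v m) ∨ w = v m} :=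
      ⟨show (G.dist (v m) (v i) : ℝ) ≤ (s : ℝ) by exact_mod_cast h1, hmax i⟩
    have m2 : v (i + ((2 * s : ℕ) : ZMod n)) ∈
        gBall G (v m) (s : ℝ) ∩ {w : V | lt w (v m) ∨ w = v m} := by
      refine ⟨show (G.dist (v m) _ : ℝ) ≤ (s : ℝ) by exact_mod_cast h2, ?_⟩
      rw [e2]; exact hmax _
    have b1 : G.dist u (v i) ≤ s' := by
      have h' : (G.dist u (v i) : ℝ) ≤ (s' : ℝ) := hsub m1
      exact_mod_cast h'
    have b2 : G.dist u (v (i + ((2 * s : ℕ) : ZMod n))) ≤ s' := by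
      have h' : (G.dist u (v (i + ((2 * s : ℕ) : ZMod n))) : ℝ) ≤ (s' : ℝ) := hsub m2
      exact_mod_cast h'
    calc G.dist (v i) (v (i + ((2 * s : ℕ) : ZMod n)))
        ≤ G.dist (v i) u + G.dist u (v (i + ((2 * s : ℕ) : ZMod n))) := hG.dist_triangle
      _ ≤ s' + s' := by rw [SimpleGraph.dist_comm]; exact Nat.add_le_add b1 b2
      _ = 2 * s' := by ring
  · push_neg at hle
    refine ⟨0, ?_⟩
    have hall : ∀ j : ZMod n, v j = v m := fun j => (hmax j).resolve_left (hle _)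
    rw [hall 0, hall (0 + ((2 * s : ℕ) : ZMod n)), SimpleGraph.dist_self]
    exact Nat.zero_le _
end

section
/- If a connected graph G is (s,s−1)-dismantlable for an integer s ≥ 1, then G does not contain any finite locally s-isometric subgraph. -/
open SimpleGraph

variable {V : Type*}

/-- A walk of `G` is a geodesic if its length equals the distance between its endpoints. -/
def IsGeodesicWalk (G : SimpleGraph V) {x y : V} (p : G.Walk x y) : Prop :=
  p.length = G.dist x y

/-- `H` is a locally `s`-isometric subgraph of `G`: `H` contains a collection `P` of
geodesics of `G` such that every vertex `v` of `H` lies on some geodesic of `P` whose two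
endpoints are both at distance at least `s` from `v` in `G`. -/
def LocallyIsometricIn (G : SimpleGraph V) (H : G.Subgraph) (s : ℕ) : Prop :=
  H.verts.Nonempty ∧
  ∃ P : Set (Σ x y : V, G.Walk x y),
    (∀ p ∈ P, IsGeodesicWalk G p.2.2 ∧
      (∀ v ∈ p.2.2.support, v ∈ H.verts) ∧
      (∀ e ∈ p.2.2.edges, e ∈ H.edgeSet)) ∧
    (∀ v ∈ H.verts, ∃ p ∈ P, v ∈ p.2.2.support ∧
      s ≤ G.dist v p.1 ∧ s ≤ G.dist v p.2.1)

/-! Let `v` be the last vertex of the finite subgraph `H` in the dismantling order, so that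
`H ⊆ X_v`, and let `a`, `b` be the vertices at distance `s` from `v` on either side of a geodesic
of `H` through `v`, so that `d(a, b) = 2s`. If `u` eliminates `v`, take a shortest `(v, a)`-path:
if it avoids `u`, then `a ∈ B_s(v, G − u) ∩ X_v ⊆ B_{s−1}(u)`; otherwise `u ≠ v` lies on it and
again `d(u, a) < s`. Likewise `d(u, b) < s`, contradicting `d(a, b) = 2s`. -/

lemma Set.Finite.exists_rel_or_eq_of_isWellOrder {α : Type*} (r : α → α → Prop) [IsWellOrder α r]
    {s : Set α} (hs : s.Finite) (hne : s.Nonempty) : ∃ v ∈ s, ∀ w ∈ s, r w v ∨ w = v := by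
  obtain ⟨v, hv, hmax⟩ :=
    (Set.wellFoundedOn_iff.mp (hs.wellFoundedOn (r := Function.swap r))).has_min s hne
  exact ⟨v, hv, fun w hw => (trichotomous_of r w v).imp_right
    fun h => h.resolve_right fun hvw => hmax w hw ⟨hvw, hw, hv⟩⟩

namespace SimpleGraph

variable {G : SimpleGraph V}

lemma Walk.exists_mem_support_dist_le_and_dist_add_le {x y : V} (q : G.Walk x y) {s : ℕ}
    (hs : s ≤ q.length) : ∃ a ∈ q.support, G.dist x a ≤ s ∧ G.dist a y + s ≤ q.length := by
  refine ⟨q.getVert s, q.getVert_mem_support s, ?_, ?_⟩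
  · simpa [hs] using dist_le (q.take s)
  · have := dist_le (q.drop s)
    rw [Walk.drop_length] at this
    omega

lemma IsGeodesicWalk.exists_mem_support_two_mul_le_dist (hG : G.Connected) {x y v : V}
    {p : G.Walk x y} (hp : IsGeodesicWalk G p) (hv : v ∈ p.support) {s : ℕ}
    (hx : s ≤ G.dist v x) (hy : s ≤ G.dist v y) :
    ∃ a ∈ p.support, ∃ b ∈ p.support, G.dist v a ≤ s ∧ G.dist v b ≤ s ∧ 2 * s ≤ G.dist a b := by
  classical
  set q₁ := (p.takeUntil v hv).reverse
  set q₂ := p.dropUntil v hv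
  have hlen : q₁.length + q₂.length = G.dist x y := by
    rw [Walk.length_reverse, ← Walk.length_append, Walk.take_spec]
    exact hp
  obtain ⟨a, ha, hva, hax⟩ := q₁.exists_mem_support_dist_le_and_dist_add_le (hx.trans (dist_le q₁))
  obtain ⟨b, hb, hvb, hby⟩ := q₂.exists_mem_support_dist_le_and_dist_add_le (hy.trans (dist_le q₂))
  refine ⟨a, p.support_takeUntil_subset_support hv (by simpa [q₁] using ha),
    b, p.support_dropUntil_subset_support hv hb, hva, hvb, ?_⟩
  have hxy := hG.dist_triangle (u := x) (v := a) (w := y)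
  have hay := hG.dist_triangle (u := a) (v := b) (w := y)
  rw [dist_comm] at hax
  omega

lemma dist_lt_of_gBallRemove_subset (hG : G.Connected) {s : ℕ} {u v e : V} {X : Set V}
    (huv : u ≠ v) (helim : gBallRemove G u v s ∩ X ⊆ gBall G u ((s : ℝ) - 1))
    (he : e ∈ X) (hve : G.dist v e ≤ s) : G.dist u e < s := by
  classical
  obtain ⟨q, hq⟩ := hG.exists_walk_length_eq_dist v e
  by_cases hu : u ∈ q.support
  · calc G.dist u e ≤ (q.dropUntil u hu).length := dist_le _
      _ < q.length := Walk.length_dropUntil_lt_length hu huv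
      _ ≤ s := hq ▸ hve
  · have hqu : ∀ w ∈ q.support, w ∈ {w | w ≠ u} := fun w hw hwu => hu (hwu ▸ hw)
    have hball : e ∈ gBallRemove G u v s := by
      have hlen := congrArg Walk.length (q.map_induce hqu)
      rw [Walk.length_map] at hlen
      refine ⟨_, _, (q.induce _ hqu).reachable, ?_⟩
      exact_mod_cast (dist_le _).trans (hlen.trans hq ▸ hve)
    have hue : (G.dist u e : ℝ) ≤ s - 1 := helim ⟨hball, he⟩
    exact_mod_cast (by linarith : (G.dist u e : ℝ) < s)

end SimpleGraph

theorem statement7 (V : Type*) (G : SimpleGraph V) (hG : G.Connected)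
    (s : ℕ) (hs : 1 ≤ s)
    (hd : Dismantlable G (s : ℝ) ((s : ℝ) - 1)) :
    ¬ ∃ H : G.Subgraph, H.verts.Finite ∧ LocallyIsometricIn G H s := by
  rintro ⟨H, hfin, hne, P, hP, hcov⟩
  obtain ⟨lt, hwo, helim⟩ := hd
  obtain ⟨v, hvH, hvmax⟩ := hfin.exists_rel_or_eq_of_isWellOrder lt hne
  obtain ⟨⟨x, y, p⟩, hpP, hvp, hvx, hvy⟩ := hcov v hvH
  obtain ⟨hgeo, hpH, -⟩ := hP _ hpP
  have hX : ∀ w ∈ p.support, lt w v ∨ w = v := fun w hw => hvmax w (hpH w hw)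
  by_cases hleast : ∃ w, lt w v
  · obtain ⟨u, hlt, hsub⟩ := helim v hleast
    have huv : u ≠ v := ne_of_irrefl hlt
    obtain ⟨a, ha, b, hb, hva, hvb, hab⟩ := hgeo.exists_mem_support_two_mul_le_dist hG hvp hvx hvy
    have hua := dist_lt_of_gBallRemove_subset hG huv hsub (hX a ha) hva
    have hub := dist_lt_of_gBallRemove_subset hG huv hsub (hX b hb) hvb
    have hab_le := hG.dist_triangle (u := a) (v := u) (w := b)
    rw [dist_comm] at hua
    omega
  · obtain rfl : x = v := (hX x p.start_mem_support).resolve_left fun h => hleast ⟨x, h⟩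
    rw [SimpleGraph.dist_self] at hvx
    omega
end

section
/- Let s ≥ 1 be an integer. If a connected graph G contains an s-geodesically covered cycle, then G contains a finite locally s-isometric subgraph. In particular, if G is (s,s−1)-dismantlable, then G contains no s-geodesically covered cycle. -/
open SimpleGraph

variable {V : Type*}

/-- A simple cycle of `G` of length `m`, given as an injective map `ZMod m → V` whose
consecutive values are adjacent. -/
def IsCycleMap (G : SimpleGraph V) {m : ℕ} (c : ZMod m → V) : Prop :=
  3 ≤ m ∧ Function.Injective c ∧ ∀ i : ZMod m, G.Adj (c i) (c (i + 1))

/-- The simple cycle `c` (of length `m`) is `s`-geodesically covered: there is a cyclic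
family of `n` subpaths of `c` (the `i`-th one starting at position `a i` and having length
`l i`), each of which is a geodesic of `G`, covering all edges of `c`, such that
nonconsecutive members are edge-disjoint and consecutive members overlap in a common
subpath of length at least `2s`. -/
def GeodCovered (G : SimpleGraph V) (s : ℕ) {m : ℕ} (c : ZMod m → V) : Prop :=
  ∃ n : ℕ, 0 < n ∧ ∃ (a : ZMod n → ZMod m) (l : ZMod n → ℕ),
    (∀ i : ZMod n, l i < m) ∧
    -- each subpath is a geodesic of G
    (∀ i : ZMod n, G.dist (c (a i)) (c (a i + ((l i : ℕ) : ZMod m))) = l i) ∧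
    -- every edge of c lies on some member of the family
    (∀ j : ZMod m, ∃ i : ZMod n, ∃ t : ℕ, t < l i ∧ a i + ((t : ℕ) : ZMod m) = j) ∧
    -- nonconsecutive members are edge-disjoint
    (∀ i i' : ZMod n, i' ≠ i → i' ≠ i + 1 → i ≠ i' + 1 →
      ∀ t t' : ℕ, t < l i → t' < l i' →
        a i + ((t : ℕ) : ZMod m) ≠ a i' + ((t' : ℕ) : ZMod m)) ∧
    -- consecutive members overlap in a common subpath of length at least 2s
    (∀ i : ZMod n, ∃ k : ℕ, 2 * s ≤ k ∧ k ≤ l i ∧ k ≤ l (i + 1) ∧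
      a (i + 1) + ((k : ℕ) : ZMod m) = a i + ((l i : ℕ) : ZMod m))

/-! Fix positions `a i` and lengths `l i` of the covering geodesics along the cycle. Because
consecutive geodesics overlap in `k i ≥ 2 s` edges, the deep parts (positions in `[s, l i - s]`)
of consecutive geodesics abut, so their union along the chain `0, 1, …, r` is an interval of the
unrolled cycle; one full turn advances it by a positive multiple of the cycle length. Hence every
vertex of the cycle is at distance at least `s` from both ends of some covering geodesic, and the
cycle is a finite locally `s`-isometric subgraph.

Conversely, let `v` be the last vertex of such a subgraph `H` in an `(s, s - 1)`-dismantling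
order, and `x`, `y` the points at distance `s` before and after `v` on a geodesic through `v`, so
`d(x, y) = 2 s`. If the eliminating vertex `u` of `v` lies on a geodesic from `v` to `x`, it is
within `s - 1` of `x`; otherwise that geodesic avoids `u`, so `x` lies in `B_s(v, G - u)`, and
again `d(u, x) ≤ s - 1`. The same holds for `y`, contradicting `d(x, y) = 2 s`. -/

lemma Set.Finite.exists_forall_rel_or_eq {α : Type*} {r : α → α → Prop}
    [IsStrictTotalOrder α r] {S : Set α} (hS : S.Finite) (hne : S.Nonempty) :
    ∃ v ∈ S, ∀ w ∈ S, r w v ∨ w = v := by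
  let _ : PartialOrder α := partialOrderOfSO r
  obtain ⟨v, hvS, hvmax⟩ := hS.exists_maximal hne
  refine ⟨v, hvS, fun w hw => ?_⟩
  rcases trichotomous_of r w v with h | h | h
  · exact .inl h
  · exact .inr h
  · exact (hvmax hw (.inr h)).symm

section ArcCover

variable {m n s : ℕ}

/-- Where arc `r` starts, counted along the cycle from the start of arc `0` without reducing
modulo the cycle length. -/
def arcOffset (l k : ZMod n → ℕ) (r : ℕ) : ℕ := ∑ q ∈ Finset.range r, (l q - k q)

lemma arcOffset_succ (l k : ZMod n → ℕ) (r : ℕ) :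
    arcOffset l k (r + 1) = arcOffset l k r + (l r - k r) :=
  Finset.sum_range_succ _ r

lemma eq_add_arcOffset {a : ZMod n → ZMod m} {l k : ZMod n → ℕ} (hkl : ∀ i, k i ≤ l i)
    (hov : ∀ i, a (i + 1) + k i = a i + l i) (r : ℕ) :
    a r = a 0 + arcOffset l k r := by
  induction r with
  | zero => simp [arcOffset]
  | succ r ih =>
    have step : a (r + 1) = a r + (l r - k r : ℕ) := by
      rw [Nat.cast_sub (hkl r)]
      linear_combination hov r
    rw [Nat.cast_succ, step, ih, arcOffset_succ, Nat.cast_add]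
    ring

lemma exists_deep_of_le_arcOffset {a : ZMod n → ZMod m} {l k : ZMod n → ℕ}
    (hk : ∀ i, 2 * s ≤ k i) (hkl : ∀ i, k i ≤ l i) (hov : ∀ i, a (i + 1) + k i = a i + l i)
    {r t : ℕ} (hst : s ≤ t) (ht : t + s ≤ arcOffset l k r + l r) :
    ∃ i t', s ≤ t' ∧ t' + s ≤ l i ∧ a i + t' = a 0 + t := by
  induction r with
  | zero => exact ⟨0, t, hst, by simpa [arcOffset] using ht, rfl⟩
  | succ r ih =>
    by_cases hr : t + s ≤ arcOffset l k r + l r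
    · exact ih hr
    · have := arcOffset_succ l k r
      have := hk r
      have := hkl r
      refine ⟨(r + 1 : ℕ), t - arcOffset l k (r + 1), by omega, by omega, ?_⟩
      rw [eq_add_arcOffset hkl hov, add_assoc, ← Nat.cast_add, Nat.add_sub_cancel' (by omega)]

lemma le_arcOffset_of_cover [NeZero n] {a : ZMod n → ZMod m} {l k : ZMod n → ℕ}
    (hkl : ∀ i, k i ≤ l i) (hov : ∀ i, a (i + 1) + k i = a i + l i) (hlm : ∀ i, l i < m)
    (hcov : ∀ j : ZMod m, ∃ i t, t < l i ∧ a i + t = j) :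
    m ≤ arcOffset l k n := by
  have hdvd : (arcOffset l k n : ZMod m) = 0 := by
    simpa using (eq_add_arcOffset hkl hov n).symm
  refine Nat.le_of_dvd (Nat.pos_of_ne_zero fun h0 => ?_) ((ZMod.natCast_eq_zero_iff _ _).mp hdvd)
  -- with no net advance, all arcs start at `a 0` and nothing covers `a 0 - 1`
  have hconst (i : ZMod n) : a i = a 0 := by
    have hle : arcOffset l k i.val ≤ arcOffset l k n :=
      Finset.sum_le_sum_of_subset (Finset.range_subset_range.mpr i.val_lt.le)
    simpa [h0, show arcOffset l k i.val = 0 by omega] using eq_add_arcOffset hkl hov i.val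
  obtain ⟨i, t, hti, hat⟩ := hcov (a 0 - 1)
  have : ((t + 1 : ℕ) : ZMod m) = 0 := by
    rw [hconst] at hat
    push_cast
    linear_combination hat
  have := Nat.le_of_dvd (Nat.succ_pos t) ((ZMod.natCast_eq_zero_iff _ _).mp this)
  have := hlm i
  omega

theorem exists_deep_of_cover [NeZero n] [NeZero m] {a : ZMod n → ZMod m} {l k : ZMod n → ℕ}
    (hk : ∀ i, 2 * s ≤ k i) (hkl : ∀ i, k i ≤ l i) (hov : ∀ i, a (i + 1) + k i = a i + l i)
    (hlm : ∀ i, l i < m) (hcov : ∀ j : ZMod m, ∃ i t, t < l i ∧ a i + t = j) (j : ZMod m) :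
    ∃ i t, s ≤ t ∧ t + s ≤ l i ∧ a i + t = j := by
  have hm := le_arcOffset_of_cover hkl hov hlm hcov
  have := (j - a 0 - s).val_lt
  have := hk 0
  have := hkl 0
  -- `j = a 0 + t` with `t ∈ [s, s + m)`, which lies within the first turn
  obtain ⟨i, t, h⟩ := exists_deep_of_le_arcOffset (a := a) (r := n)
    (t := s + (j - a 0 - s).val) hk hkl hov (by omega) (by rw [ZMod.natCast_self]; omega)
  exact ⟨i, t, h.1, h.2.1, by rw [h.2.2, Nat.cast_add, ZMod.natCast_zmod_val]; ring⟩

end ArcCover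

namespace SimpleGraph

variable {G : SimpleGraph V}

namespace Walk

def ofSeq : (f : ℕ → V) → (∀ i, G.Adj (f i) (f (i + 1))) → (t : ℕ) → G.Walk (f 0) (f t)
  | _, _, 0 => nil
  | f, hf, t + 1 => cons (hf 0) (ofSeq (fun i => f (i + 1)) (fun i => hf (i + 1)) t)

@[simp]
lemma length_ofSeq (f : ℕ → V) (hf : ∀ i, G.Adj (f i) (f (i + 1))) (t : ℕ) :
    (ofSeq f hf t).length = t := by
  induction t generalizing f with
  | zero => rfl
  | succ t ih => simp [ofSeq, ih]

lemma getVert_ofSeq (f : ℕ → V) (hf : ∀ i, G.Adj (f i) (f (i + 1))) {t n : ℕ} (hn : n ≤ t) :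
    (ofSeq f hf t).getVert n = f n := by
  induction t generalizing f n with
  | zero => rw [Nat.le_zero.mp hn]; rfl
  | succ t ih =>
    cases n with
    | zero => rfl
    | succ n => exact ih _ _ (by omega)

lemma dist_getVert_getVert {u v : V} {p : G.Walk u v} (hp : p.length = G.dist u v)
    {i j : ℕ} (hij : i ≤ j) (hj : j ≤ p.length) :
    G.dist (p.getVert i) (p.getVert j) = j - i := by
  have hsub : ((p.drop i).take (j - i)).IsSubwalk p :=
    (isSubwalk_take _ _).trans (isSubwalk_drop _ _)
  have := length_eq_dist_of_subwalk hp hsub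
  rw [take_length, drop_length, drop_getVert, Nat.add_sub_cancel' hij] at this
  omega

lemma length_induce {s : Set V} {u v : V} (p : G.Walk u v) (hp : ∀ x ∈ p.support, x ∈ s) :
    (p.induce s hp).length = p.length := by
  have := congrArg length (p.map_induce hp)
  rwa [length_map] at this

end Walk

lemma Dismantlable.starDismantlable (hG : G.Connected) {s s' : ℝ} (hd : Dismantlable G s s')
    (hs' : s - 1 ≤ s') : StarDismantlable G s s' := by
  classical
  obtain ⟨lt, hwo, helim⟩ := hd
  refine ⟨lt, hwo, fun v hv => ?_⟩
  obtain ⟨u, huv, hball⟩ := helim v hv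
  refine ⟨u, huv, fun z ⟨hz, hzX⟩ => ?_⟩
  have hz : (G.dist v z : ℝ) ≤ s := hz
  obtain ⟨q, hq⟩ := hG.exists_walk_length_eq_dist v z
  by_cases hu : u ∈ q.support
  · -- past `u ≠ v`, a geodesic from `v` needs at most `d(v, z) - 1` more steps to reach `z`
    have hpos : 1 ≤ (q.takeUntil u hu).length := by
      refine Nat.one_le_iff_ne_zero.mpr fun h => ?_
      exact (ne_of_irrefl huv) (Walk.eq_of_length_eq_zero h).symm
    have hlen := congrArg Walk.length (q.take_spec hu)
    rw [Walk.length_append] at hlen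
    have : G.dist u z + 1 ≤ G.dist v z := by
      have := dist_le (q.dropUntil u hu)
      omega
    show (G.dist u z : ℝ) ≤ s'
    have : (G.dist u z : ℝ) + 1 ≤ G.dist v z := by exact_mod_cast this
    linarith
  · have hq' : ∀ x ∈ q.support, x ∈ {w | w ≠ u} := fun x hx hxu => hu (hxu ▸ hx)
    refine hball ⟨⟨_, _, (q.induce _ hq').reachable, ?_⟩, hzX⟩
    calc (((G.induce {w | w ≠ u}).dist _ _ : ℕ) : ℝ) ≤ (q.induce _ hq').length := by
          exact_mod_cast dist_le _
      _ ≤ s := by rw [Walk.length_induce, hq]; exact hz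

theorem StarDismantlable.not_locallyIsometricIn (hG : G.Connected) {s : ℕ} (hs : 1 ≤ s)
    (hd : StarDismantlable G s (s - 1)) {H : G.Subgraph} (hfin : H.verts.Finite) :
    ¬ LocallyIsometricIn G H s := by
  rintro ⟨hne, P, hP, hdeep⟩
  obtain ⟨lt, hwo, helim⟩ := hd
  obtain ⟨v, hvH, hvmax⟩ := hfin.exists_forall_rel_or_eq (r := lt) hne
  obtain ⟨⟨x, y, p⟩, hpP, hvp, hxv, hyv⟩ := hdeep v hvH
  obtain ⟨hgeo, hpH, -⟩ := hP _ hpP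
  dsimp only at hvp hxv hyv hgeo hpH
  obtain ⟨n, rfl, hn⟩ := Walk.mem_support_iff_exists_getVert.mp hvp
  have hdist {i j : ℕ} (hij : i ≤ j) (hj : j ≤ p.length) :=
    Walk.dist_getVert_getVert hgeo hij hj
  have hnx : G.dist x (p.getVert n) = n := by
    simpa using hdist (Nat.zero_le n) hn
  have hny : G.dist (p.getVert n) y = p.length - n := by
    simpa using hdist hn le_rfl
  rw [dist_comm] at hxv
  have hx' : G.dist (p.getVert n) (p.getVert (n - s)) = s := by
    rw [dist_comm, hdist (Nat.sub_le n s) hn]; omega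
  have hy' : G.dist (p.getVert n) (p.getVert (n + s)) = s := by
    rw [hdist (Nat.le_add_right n s) (by omega)]; omega
  have hx'y' : G.dist (p.getVert (n - s)) (p.getVert (n + s)) = 2 * s := by
    rw [hdist (by omega) (by omega)]; omega
  have hx'lt : lt (p.getVert (n - s)) (p.getVert n) := by
    refine (hvmax _ (hpH _ (p.getVert_mem_support _))).resolve_right fun h => ?_
    rw [h, dist_self] at hx'; omega
  obtain ⟨u, -, hu⟩ := helim _ ⟨_, hx'lt⟩
  have hclose {w : V} (hw : w ∈ p.support) (hvw : G.dist (p.getVert n) w = s) :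
      G.dist u w + 1 ≤ s := by
    have : (G.dist u w : ℝ) ≤ s - 1 :=
      hu ⟨show (G.dist _ w : ℝ) ≤ s by rw [hvw], hvmax w (hpH w hw)⟩
    have : (G.dist u w : ℝ) + 1 ≤ s := by linarith
    exact_mod_cast this
  have := hclose (p.getVert_mem_support _) hx'
  have := hclose (p.getVert_mem_support _) hy'
  have := hG.dist_triangle (u := p.getVert (n - s)) (v := u) (w := p.getVert (n + s))
  have := G.dist_comm (u := p.getVert (n - s)) (v := u)
  omega

theorem IsCycleMap.exists_finite_locallyIsometricIn {m s : ℕ} {c : ZMod m → V}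
    (hc : IsCycleMap G c) (hcov : GeodCovered G s c) :
    ∃ H : G.Subgraph, H.verts.Finite ∧ LocallyIsometricIn G H s := by
  obtain ⟨hm, -, hadj⟩ := hc
  obtain ⟨n, hn, a, l, hlm, hgeo, hcover, -, hov⟩ := hcov
  have : NeZero m := ⟨by omega⟩
  have : NeZero n := ⟨hn.ne'⟩
  choose k hk hkl _ hak using hov
  let arc (i : ZMod n) : G.Walk (c (a i + (0 : ℕ))) (c (a i + (l i : ℕ))) :=
    Walk.ofSeq (fun t : ℕ => c (a i + t))
      (fun t => by simpa only [Nat.cast_succ, add_assoc] using hadj (a i + t)) (l i)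
  have harc (i : ZMod n) {t : ℕ} (ht : t ≤ l i) : (arc i).getVert t = c (a i + t) :=
    Walk.getVert_ofSeq _ _ ht
  have harc_geo (i : ZMod n) :
      (arc i).length = G.dist (c (a i + (0 : ℕ))) (c (a i + (l i : ℕ))) := by
    simpa [arc] using (hgeo i).symm
  have harc_range (i : ZMod n) : ∀ x ∈ (arc i).support, x ∈ Set.range c := by
    intro x hx
    obtain ⟨t, rfl, ht⟩ := Walk.mem_support_iff_exists_getVert.mp hx
    rw [Walk.length_ofSeq] at ht
    exact ⟨_, (harc i ht).symm⟩
  refine ⟨(⊤ : G.Subgraph).induce (Set.range c), Set.finite_range c, ⟨c 0, 0, rfl⟩,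
    Set.range fun i => ⟨_, _, arc i⟩, ?_, ?_⟩
  · rintro _ ⟨i, rfl⟩
    refine ⟨harc_geo i, harc_range i, fun e he => ?_⟩
    exact Subgraph.edgeSet_mono ((arc i).toSubgraph_le_induce_support.trans
      (Subgraph.induce_mono_right (harc_range i))) ((arc i).mem_edges_toSubgraph.mpr he)
  · rintro _ ⟨j, rfl⟩
    obtain ⟨i, t, hst, hts, rfl⟩ := exists_deep_of_cover hk hkl hak hlm hcover j
    have hlen : (arc i).length = l i := Walk.length_ofSeq _ _ _
    have hdist {t t' : ℕ} (htt' : t ≤ t') (ht' : t' ≤ l i) :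
        G.dist (c (a i + t)) (c (a i + t')) = t' - t := by
      rw [← harc i (htt'.trans ht'), ← harc i ht']
      exact Walk.dist_getVert_getVert (harc_geo i) htt' (hlen.symm ▸ ht')
    refine ⟨_, ⟨i, rfl⟩, ?_, ?_, ?_⟩
    · exact harc i (t := t) (by omega) ▸ (arc i).getVert_mem_support t
    · show s ≤ G.dist _ (c (a i + (0 : ℕ)))
      rw [dist_comm, hdist (Nat.zero_le t) (by omega)]
      omega
    · show s ≤ G.dist _ (c (a i + (l i : ℕ)))
      rw [hdist (by omega) le_rfl]
      omega

end SimpleGraph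

theorem statement8 (V : Type*) (G : SimpleGraph V) (hG : G.Connected)
    (s : ℕ) (hs : 1 ≤ s) :
    ((∃ (m : ℕ) (c : ZMod m → V), IsCycleMap G c ∧ GeodCovered G s c) →
      ∃ H : G.Subgraph, H.verts.Finite ∧ LocallyIsometricIn G H s) ∧
    (Dismantlable G (s : ℝ) ((s : ℝ) - 1) →
      ¬ ∃ (m : ℕ) (c : ZMod m → V), IsCycleMap G c ∧ GeodCovered G s c) := by
  have hcycle : (∃ (m : ℕ) (c : ZMod m → V), IsCycleMap G c ∧ GeodCovered G s c) →
      ∃ H : G.Subgraph, H.verts.Finite ∧ LocallyIsometricIn G H s :=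
    fun ⟨_, _, hc, hcov⟩ => hc.exists_finite_locallyIsometricIn hcov
  refine ⟨hcycle, fun hd hc => ?_⟩
  obtain ⟨H, hfin, hH⟩ := hcycle hc
  exact (hd.starDismantlable hG le_rfl).not_locallyIsometricIn hG hs hfin hH
end

section
/- If a connected graph G is (s,s−1)-dismantlable for an integer s ≥ 1, then G does not contain an isometrically embedded 2s × 2s square grid; that is, there is no map φ from {0,1,…,2s} × {0,1,…,2s} to the vertex set of G such that d_G(φ(a), φ(b)) = |a₁ − b₁| + |a₂ − b₂| for all a = (a₁,a₂) and b = (b₁,b₂). -/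
/-!
Let `v = φ a` be the grid vertex that comes last in the elimination order, so the whole grid
lies in `X_v`, and let `u` eliminate `v`. Walking `s` steps from `a` along its row or its
column stays in `G - u` as long as that line avoids `u`, so it ends in `B_s(v, G - u)`. If `u`
lies on the column of `a`, the row avoids it and the end of the row walk is at distance at least
`s` from `u`; symmetrically for the row. Otherwise the ends of the two walks are `2s` apart, so
one of them is at distance at least `s` from `u`. Either way `B_s(v, G - u) ∩ X_v ⊄ B_{s-1}(u)`.
-/

open SimpleGraph

variable {V : Type*}

lemma mem_gBallRemove_of_walk {G : SimpleGraph V} {u v x : V} (w : G.Walk v x)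
    (hu : u ∉ w.support) :
    x ∈ gBallRemove G u v w.length := by
  have hw : ∀ y ∈ w.support, y ∈ {y : V | y ≠ u} := fun y hy h => hu (h ▸ hy)
  refine ⟨_, _, ⟨w.induce _ hw⟩, ?_⟩
  have hlen : (w.induce _ hw).length = w.length := by
    have h := congrArg Walk.length (w.map_induce hw)
    rwa [Walk.length_map] at h
  exact_mod_cast hlen ▸ dist_le (w.induce _ hw)

lemma exists_walk_of_adj_succ {G : SimpleGraph V} (f : ℕ → V) {i j : ℕ} (hij : i ≤ j)
    (hf : ∀ k, i ≤ k → k < j → G.Adj (f k) (f (k + 1))) :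
    ∃ w : G.Walk (f i) (f j), w.length = j - i ∧ ∀ x ∈ w.support, ∃ k, f k = x := by
  induction j, hij using Nat.le_induction with
  | base => exact ⟨.nil, by simp, by simp⟩
  | succ j hij ih =>
    obtain ⟨w, hlen, hsupp⟩ := ih fun k hik hkj => hf k hik (by omega)
    refine ⟨w.concat (hf j hij (by omega)), by rw [Walk.length_concat]; omega, fun x hx => ?_⟩
    simp only [Walk.support_concat, List.mem_append, List.mem_singleton] at hx
    rcases hx with hx | rfl
    · exact hsupp x hx
    · exact ⟨_, rfl⟩

def IsGridEmbedding (G : SimpleGraph V) (n : ℕ) (φ : Fin (n + 1) × Fin (n + 1) → V) : Prop :=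
  ∀ a b, G.dist (φ a) (φ b) =
    ((a.1 : ℤ) - (b.1 : ℤ)).natAbs + ((a.2 : ℤ) - (b.2 : ℤ)).natAbs

lemma Fin.exists_natAbs_sub_eq (s : ℕ) (i : Fin (2 * s + 1)) :
    ∃ j : Fin (2 * s + 1), ((i : ℤ) - j).natAbs = s := by
  rcases le_or_gt (i : ℕ) s with h | h
  · exact ⟨⟨i + s, by omega⟩, by simp⟩
  · exact ⟨⟨i - s, by omega⟩, by simp; omega⟩

namespace IsGridEmbedding

variable {G : SimpleGraph V} {n : ℕ} {φ : Fin (n + 1) × Fin (n + 1) → V}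

lemma injective (hφ : IsGridEmbedding G n φ) : Function.Injective φ := by
  intro a b h
  have h' := hφ a b
  rw [h, dist_self] at h'
  ext <;> omega

lemma comp_swap (hφ : IsGridEmbedding G n φ) : IsGridEmbedding G n (φ ∘ Prod.swap) :=
  fun a b => (hφ a.swap b.swap).trans (Nat.add_comm _ _)

lemma adj_clamp (hφ : IsGridEmbedding G n φ) (c : Fin (n + 1)) {k : ℕ} (hk : k < n) :
    G.Adj (φ (c, Fin.clamp k n)) (φ (c, Fin.clamp (k + 1) n)) := by
  rw [← dist_eq_one_iff_adj, hφ]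
  simp only [sub_self, Int.natAbs_zero, Fin.coe_clamp, zero_add]
  omega

lemma exists_walk_column (hφ : IsGridEmbedding G n φ) (c i j : Fin (n + 1)) :
    ∃ w : G.Walk (φ (c, i)) (φ (c, j)),
      w.length = ((i : ℤ) - j).natAbs ∧ ∀ x ∈ w.support, ∃ k, φ (c, k) = x := by
  wlog hij : i ≤ j generalizing i j
  · obtain ⟨w, hlen, hsupp⟩ := this j i (le_of_not_ge hij)
    exact ⟨w.reverse, by rw [Walk.length_reverse, hlen]; omega, by simpa using hsupp⟩
  have hclamp (k : Fin (n + 1)) : Fin.clamp k n = k := Fin.ext (by simp; omega)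
  obtain ⟨w, hlen, hsupp⟩ := exists_walk_of_adj_succ (fun k => φ (c, Fin.clamp k n))
    (Fin.le_iff_val_le_val.1 hij) fun k _ hk => hφ.adj_clamp c (by omega)
  refine ⟨w.copy (by rw [hclamp]) (by rw [hclamp]), by rw [Walk.length_copy, hlen]; omega, ?_⟩
  intro x hx
  obtain ⟨k, hk⟩ := hsupp x (by simpa using hx)
  exact ⟨_, hk⟩

lemma mem_gBallRemove_of_column (hφ : IsGridEmbedding G n φ) {u : V} {c : Fin (n + 1)}
    (hu : ∀ k, φ (c, k) ≠ u) (i j : Fin (n + 1)) :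
    φ (c, j) ∈ gBallRemove G u (φ (c, i)) ((i : ℤ) - j).natAbs := by
  obtain ⟨w, hlen, hsupp⟩ := hφ.exists_walk_column c i j
  have hw := mem_gBallRemove_of_walk w fun h => (hsupp u h).elim fun k hk => hu k hk
  rwa [hlen] at hw

lemma mem_gBallRemove_of_row (hφ : IsGridEmbedding G n φ) {u : V} {r : Fin (n + 1)}
    (hu : ∀ k, φ (k, r) ≠ u) (i j : Fin (n + 1)) :
    φ (j, r) ∈ gBallRemove G u (φ (i, r)) ((i : ℤ) - j).natAbs :=
  hφ.comp_swap.mem_gBallRemove_of_column hu i j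

lemma exists_mem_gBallRemove_le_dist_of_column {s : ℕ}
    {φ : Fin (2 * s + 1) × Fin (2 * s + 1) → V} (hφ : IsGridEmbedding G (2 * s) φ)
    {a : Fin (2 * s + 1) × Fin (2 * s + 1)} {c : Fin (2 * s + 1)} (hca : φ (a.1, c) ≠ φ a) :
    ∃ p, φ p ∈ gBallRemove G (φ (a.1, c)) (φ a) s ∧ s ≤ G.dist (φ (a.1, c)) (φ p) := by
  have hrow : ∀ k, φ (k, a.2) ≠ φ (a.1, c) := by
    intro k hk
    obtain ⟨-, hc⟩ : k = a.1 ∧ a.2 = c := Prod.ext_iff.1 (hφ.injective hk)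
    rw [← hc] at hca
    exact hca rfl
  obtain ⟨x, hx⟩ := Fin.exists_natAbs_sub_eq s a.1
  refine ⟨(x, a.2), by simpa [hx] using hφ.mem_gBallRemove_of_row hrow a.1 x, ?_⟩
  rw [hφ]
  dsimp only
  omega

lemma exists_mem_gBallRemove_le_dist (hG : G.Connected) {s : ℕ}
    {φ : Fin (2 * s + 1) × Fin (2 * s + 1) → V} (hφ : IsGridEmbedding G (2 * s) φ)
    (a : Fin (2 * s + 1) × Fin (2 * s + 1)) {u : V} (hua : u ≠ φ a) :
    ∃ p, φ p ∈ gBallRemove G u (φ a) s ∧ s ≤ G.dist u (φ p) := by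
  by_cases hcol : ∃ c, φ (a.1, c) = u
  · obtain ⟨c, rfl⟩ := hcol
    exact hφ.exists_mem_gBallRemove_le_dist_of_column hua
  by_cases hrow : ∃ c, φ (c, a.2) = u
  · obtain ⟨c, rfl⟩ := hrow
    obtain ⟨p, hp, hdist⟩ :=
      hφ.comp_swap.exists_mem_gBallRemove_le_dist_of_column (a := a.swap) hua
    exact ⟨p.swap, hp, hdist⟩
  push Not at hcol hrow
  obtain ⟨x, hx⟩ := Fin.exists_natAbs_sub_eq s a.1
  obtain ⟨y, hy⟩ := Fin.exists_natAbs_sub_eq s a.2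
  have hxy : G.dist (φ (x, a.2)) (φ (a.1, y)) = 2 * s := by
    rw [hφ]
    dsimp only
    omega
  have htri := hG.dist_triangle (u := φ (x, a.2)) (v := u) (w := φ (a.1, y))
  rw [dist_comm (u := φ (x, a.2)) (v := u)] at htri
  by_cases hfar : s ≤ G.dist u (φ (x, a.2))
  · exact ⟨_, by simpa [hx] using hφ.mem_gBallRemove_of_row hrow a.1 x, hfar⟩
  · exact ⟨_, by simpa [hy] using hφ.mem_gBallRemove_of_column hcol a.2 y, by omega⟩

end IsGridEmbedding

theorem statement13 (V : Type*) (G : SimpleGraph V) (hG : G.Connected)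
    (s : ℕ) (hs : 1 ≤ s)
    (hd : Dismantlable G (s : ℝ) ((s : ℝ) - 1)) :
    ¬ ∃ φ : Fin (2 * s + 1) × Fin (2 * s + 1) → V,
      ∀ a b : Fin (2 * s + 1) × Fin (2 * s + 1),
        G.dist (φ a) (φ b) =
          ((a.1 : ℤ) - (b.1 : ℤ)).natAbs + ((a.2 : ℤ) - (b.2 : ℤ)).natAbs := by
  rintro ⟨φ, hφ⟩
  replace hφ : IsGridEmbedding G (2 * s) φ := hφ
  obtain ⟨lt, hwo, helim⟩ := hd
  let : LinearOrder V := IsWellOrder.linearOrder lt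
  obtain ⟨a, -, hmax⟩ := Finset.univ.exists_max_image φ Finset.univ_nonempty
  have hXv (p) : lt (φ p) (φ a) ∨ φ p = φ a := (hmax p (Finset.mem_univ p)).symm
  obtain ⟨y, hy⟩ := Fin.exists_natAbs_sub_eq s a.2
  have hya : φ (a.1, y) ≠ φ a := fun h => by
    have hd := hφ (a.1, y) a
    rw [h, dist_self] at hd
    dsimp only at hd
    omega
  obtain ⟨u, hua, hsub⟩ := helim (φ a) ⟨_, (hXv (a.1, y)).resolve_right hya⟩
  obtain ⟨p, hp, hfar⟩ := hφ.exists_mem_gBallRemove_le_dist hG a (ne_of_irrefl hua)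
  have hnear : (G.dist u (φ p) : ℝ) ≤ s - 1 := hsub ⟨hp, hXv p⟩
  have : (s : ℝ) ≤ G.dist u (φ p) := by exact_mod_cast hfar
  linarith
end

section
/- If G is a connected Helly graph, then every metric triangle of G has all three sides of length at most 1. -/
open SimpleGraph

variable {V : Type*}

/-- A Helly graph: every family of pairwise intersecting balls has a common vertex. -/
def HellyGraph (G : SimpleGraph V) : Prop :=
  ∀ (ι : Type) (c : ι → V) (r : ι → ℕ),
    (∀ i j : ι, (gBall G (c i) ((r i : ℕ) : ℝ) ∩ gBall G (c j) ((r j : ℕ) : ℝ)).Nonempty) →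
    (⋂ i : ι, gBall G (c i) ((r i : ℕ) : ℝ)).Nonempty


section AuxStatement15
variable {V : Type*} {G : SimpleGraph V}

lemma mem_gBall_aux {c x : V} {r : ℕ} : x ∈ gBall G c (r : ℝ) ↔ G.dist c x ≤ r := by
  simp [gBall, Nat.cast_le]

lemma gInterval_comm_aux (G : SimpleGraph V) (u v : V) :
    gInterval G u v = gInterval G v u := by
  ext x
  simp only [gInterval, Set.mem_setOf_eq]
  rw [SimpleGraph.dist_comm (u := v) (v := x), SimpleGraph.dist_comm (u := x) (v := u), SimpleGraph.dist_comm (u := v) (v := u)]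
  omega

lemma dist_getVert_le (hG : G.Connected) {u v : V} (p : G.Walk u v) (t : ℕ) :
    G.dist u (p.getVert t) ≤ t ∧ G.dist (p.getVert t) v ≤ p.length - t := by
  induction p generalizing t with
  | nil => cases t <;> simp [SimpleGraph.Walk.getVert, SimpleGraph.dist_self]
  | @cons a b c h q ih =>
    cases t with
    | zero =>
      simp only [SimpleGraph.Walk.getVert_zero, Nat.sub_zero]
      exact ⟨by simp, SimpleGraph.dist_le _⟩
    | succ t =>
      rw [SimpleGraph.Walk.getVert_cons_succ]
      obtain ⟨h1, h2⟩ := ih t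
      constructor
      · calc G.dist a (q.getVert t) ≤ G.dist a b + G.dist b (q.getVert t) :=
              hG.dist_triangle
          _ ≤ 1 + t := by gcongr; exact SimpleGraph.dist_le h.toWalk
          _ = t + 1 := by omega
      · simpa [SimpleGraph.Walk.length_cons] using h2.trans (by omega)

lemma exists_geodesic_point (hG : G.Connected) (u v : V) {t : ℕ}
    (ht : t ≤ G.dist u v) : ∃ x : V, G.dist u x = t ∧ G.dist x v = G.dist u v - t := by
  obtain ⟨p, hp⟩ := (hG u v).exists_walk_length_eq_dist
  obtain ⟨h1, h2⟩ := dist_getVert_le hG p t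
  rw [hp] at h2
  have h3 := hG.dist_triangle (u := u) (v := p.getVert t) (w := v)
  exact ⟨p.getVert t, by omega, by omega⟩

lemma pt (hG : G.Connected) (hH : HellyGraph G) (u v w : V)
    (key : gInterval G w u ∩ gInterval G u v = {u})
    (hb : 1 ≤ G.dist w u) (hc : 2 ≤ G.dist u v)
    (hcase : G.dist v w + 2 ≤ G.dist w u + G.dist u v) : False := by
  set a := G.dist v w with ha_def
  set b := G.dist w u with hb_def
  set c := G.dist u v with hc_def
  -- geodesic witnesses
  obtain ⟨x1, hx11, hx12⟩ := exists_geodesic_point hG u v (t := 1) (by omega)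
  obtain ⟨x2, hx21, hx22⟩ := exists_geodesic_point hG u w (t := 1)
    (by rw [SimpleGraph.dist_comm]; omega)
  have hauw : G.dist u w = b := SimpleGraph.dist_comm
  obtain ⟨x3, hx31, hx32⟩ := exists_geodesic_point hG v w (t := a - (b - 1)) (by omega)
  have pair : ∀ i j : Fin 3, (gBall G (![u, v, w] i) ((![1, c - 1, b - 1] i : ℕ) : ℝ) ∩ gBall G (![u, v, w] j) ((![1, c - 1, b - 1] j : ℕ) : ℝ)).Nonempty := by
    intro i j
    have mem0 : u ∈ gBall G (![u, v, w] 0) ((![1, c - 1, b - 1] 0 : ℕ) : ℝ) :=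
      mem_gBall_aux.mpr (show G.dist u u ≤ 1 by simp [SimpleGraph.dist_self])
    have mem1 : v ∈ gBall G (![u, v, w] 1) ((![1, c - 1, b - 1] 1 : ℕ) : ℝ) :=
      mem_gBall_aux.mpr (show G.dist v v ≤ c - 1 by simp [SimpleGraph.dist_self])
    have mem2 : w ∈ gBall G (![u, v, w] 2) ((![1, c - 1, b - 1] 2 : ℕ) : ℝ) :=
      mem_gBall_aux.mpr (show G.dist w w ≤ b - 1 by simp [SimpleGraph.dist_self])
    have m10 : x1 ∈ gBall G (![u, v, w] 0) ((![1, c - 1, b - 1] 0 : ℕ) : ℝ) :=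
      mem_gBall_aux.mpr (show G.dist u x1 ≤ 1 by omega)
    have m11 : x1 ∈ gBall G (![u, v, w] 1) ((![1, c - 1, b - 1] 1 : ℕ) : ℝ) :=
      mem_gBall_aux.mpr (show G.dist v x1 ≤ c - 1 by rw [SimpleGraph.dist_comm]; omega)
    have m20 : x2 ∈ gBall G (![u, v, w] 0) ((![1, c - 1, b - 1] 0 : ℕ) : ℝ) :=
      mem_gBall_aux.mpr (show G.dist u x2 ≤ 1 by omega)
    have m22 : x2 ∈ gBall G (![u, v, w] 2) ((![1, c - 1, b - 1] 2 : ℕ) : ℝ) :=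
      mem_gBall_aux.mpr (show G.dist w x2 ≤ b - 1 by rw [SimpleGraph.dist_comm]; omega)
    have m31 : x3 ∈ gBall G (![u, v, w] 1) ((![1, c - 1, b - 1] 1 : ℕ) : ℝ) :=
      mem_gBall_aux.mpr (show G.dist v x3 ≤ c - 1 by omega)
    have m32 : x3 ∈ gBall G (![u, v, w] 2) ((![1, c - 1, b - 1] 2 : ℕ) : ℝ) :=
      mem_gBall_aux.mpr (show G.dist w x3 ≤ b - 1 by rw [SimpleGraph.dist_comm]; omega)
    fin_cases i <;> fin_cases j
    · exact ⟨u, mem0, mem0⟩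
    · exact ⟨x1, m10, m11⟩
    · exact ⟨x2, m20, m22⟩
    · exact ⟨x1, m11, m10⟩
    · exact ⟨v, mem1, mem1⟩
    · exact ⟨x3, m31, m32⟩
    · exact ⟨x2, m22, m20⟩
    · exact ⟨x3, m32, m31⟩
    · exact ⟨w, mem2, mem2⟩

  obtain ⟨x, hx⟩ := hH (Fin 3) ![u, v, w] ![1, c - 1, b - 1] pair
  have hxu : G.dist u x ≤ 1 := mem_gBall_aux.mp (Set.mem_iInter.mp hx 0)
  have hxv : G.dist v x ≤ c - 1 := mem_gBall_aux.mp (Set.mem_iInter.mp hx 1)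
  have hxw : G.dist w x ≤ b - 1 := mem_gBall_aux.mp (Set.mem_iInter.mp hx 2)
  have t1 : G.dist u x + G.dist x v = c := by
    have := hG.dist_triangle (u := u) (v := x) (w := v)
    have hcm : G.dist x v = G.dist v x := SimpleGraph.dist_comm
    omega
  have t2 : G.dist w x + G.dist x u = b := by
    have := hG.dist_triangle (u := w) (v := x) (w := u)
    have hcm : G.dist x u = G.dist u x := SimpleGraph.dist_comm
    omega
  have hxmem : x ∈ gInterval G w u ∩ gInterval G u v := ⟨t2, t1⟩
  rw [key] at hxmem
  have hxeq : x = u := hxmem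
  subst hxeq
  have : G.dist v x = c := by rw [SimpleGraph.dist_comm]
  omega


lemma mt_side (hG : G.Connected) (hH : HellyGraph G) (u v w : V)
    (h : MetricTriangle G u v w) : G.dist u v ≤ 1 := by
  by_contra hcon
  push_neg at hcon
  obtain ⟨h1, h2, h3⟩ := h
  by_cases hcase : G.dist v w + 2 ≤ G.dist w u + G.dist u v
  · have hb : 1 ≤ G.dist w u := by
      by_contra hb0
      push_neg at hb0
      have hwu : w = u := hG.dist_eq_zero_iff.mp (by omega)
      subst hwu
      have : G.dist v w = G.dist w v := SimpleGraph.dist_comm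
      have hww : G.dist w w = 0 := SimpleGraph.dist_self
      omega
    exact pt hG hH u v w h3 hb (by omega) hcase
  · by_cases hcase2 : G.dist w u + 2 ≤ G.dist v w + G.dist u v
    · have key : gInterval G w v ∩ gInterval G v u = {v} := by
        rw [gInterval_comm_aux G w v, gInterval_comm_aux G v u, Set.inter_comm]
        exact h1
      have ha : 1 ≤ G.dist w v := by
        by_contra ha0
        push_neg at ha0
        have hwv : w = v := hG.dist_eq_zero_iff.mp (by omega)
        subst hwv
        have e2 : G.dist w u = G.dist u w := SimpleGraph.dist_comm
        have hww : G.dist w w = 0 := SimpleGraph.dist_self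
        omega
      have hc' : 2 ≤ G.dist v u := by
        have : G.dist u v = G.dist v u := SimpleGraph.dist_comm
        omega
      have hcase2' : G.dist u w + 2 ≤ G.dist w v + G.dist v u := by
        have e1 : G.dist v w = G.dist w v := SimpleGraph.dist_comm
        have e2 : G.dist w u = G.dist u w := SimpleGraph.dist_comm
        have e3 : G.dist u v = G.dist v u := SimpleGraph.dist_comm
        omega
      exact pt hG hH v u w key ha hc' hcase2'
    · omega

end AuxStatement15

theorem statement15 (V : Type*) (G : SimpleGraph V) (hG : G.Connected)
    (hH : HellyGraph G) :
    ∀ u v w : V, MetricTriangle G u v w →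
      G.dist u v ≤ 1 ∧ G.dist v w ≤ 1 ∧ G.dist w u ≤ 1 := by
  intro u v w h
  exact ⟨mt_side hG hH u v w h, mt_side hG hH v w u ⟨h.2.1, h.2.2, h.1⟩,
    mt_side hG hH w u v ⟨h.2.2, h.1, h.2.1⟩⟩
end

section
/- If G is a connected Helly graph that is (s,s−1)-dismantlable for an integer s ≥ 1, then G is (64s+20)-hyperbolic. -/
/-
If the four-point condition fails for `u, v, x, y` by a wide margin, the Helly property realizes,
one point at a time, a closed walk of length `4n` (`n = 2s + 1`) whose vertices have prescribed
distances to `u, v, x, y`, any two of them being no farther apart than their prescribed distances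
to `u` and to `x` differ. These distances follow two triangle waves a quarter period apart, which
makes the walk geodesic on every stretch of length `n`.

Let `v` be the last vertex of the walk in the dismantling order and `u'` the vertex eliminating
it. Walking `s` steps from `v` in either direction along the walk, one either avoids `u'` and
ends in `B_s(v, G - u') ∩ X_v ⊆ B_{s-1}(u')`, or passes through `u'` and ends even closer to it.
So the two endpoints, `2s` apart along the walk, are at distance at most `2s - 2` in `G`.
-/

open SimpleGraph

variable {V : Type*}

section TriangleWave

variable (n : ℕ)

def triangleWave (θ : ℤ) : ℕ := (θ % (4 * n) - 2 * n).natAbs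

lemma triangleWave_add_mul (θ q : ℤ) : triangleWave n (θ + 4 * n * q) = triangleWave n θ := by
  simp only [triangleWave, Int.add_mul_emod_self_left]

lemma triangleWave_emod (θ : ℤ) : triangleWave n (θ % (4 * n)) = triangleWave n θ := by
  simp only [triangleWave, Int.emod_emod]

lemma triangleWave_add_eq_emod_add (θ a : ℤ) :
    triangleWave n (θ + a) = triangleWave n (θ % (4 * n) + a) := by
  rw [← triangleWave_add_mul n (θ % (4 * n) + a) (θ / (4 * n))]
  congr 1
  linear_combination -(Int.emod_add_mul_ediv θ (4 * n))

variable {n}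

lemma triangleWave_eq {p : ℤ} (h₁ : -(4 * n) ≤ p) (h₂ : p < 8 * n) :
    triangleWave n p =
      if p < 0 then (p + 2 * n).natAbs
      else if p < 4 * n then (p - 2 * n).natAbs
      else (p - 6 * n).natAbs := by
  split_ifs with h h'
  · rw [← triangleWave_add_mul n p 1, triangleWave, Int.emod_eq_of_lt (by omega) (by omega)]
    omega
  · rw [triangleWave, Int.emod_eq_of_lt (by omega) (by omega)]
  · rw [← triangleWave_add_mul n p (-1), triangleWave, Int.emod_eq_of_lt (by omega) (by omega)]
    omega

lemma triangleWave_le (hn : 0 < n) (θ : ℤ) : triangleWave n θ ≤ 2 * n := by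
  have := Int.emod_nonneg θ (b := 4 * n) (by omega)
  have := Int.emod_lt_of_pos θ (b := 4 * n) (by omega)
  unfold triangleWave
  omega

lemma dist_triangleWave_add_one_le (hn : 0 < n) (θ : ℤ) :
    Nat.dist (triangleWave n θ) (triangleWave n (θ + 1)) ≤ 1 := by
  have := Int.emod_nonneg θ (b := 4 * n) (by omega)
  have := Int.emod_lt_of_pos θ (b := 4 * n) (by omega)
  rw [← triangleWave_emod n θ, triangleWave_add_eq_emod_add,
    triangleWave_eq (by omega) (by omega), triangleWave_eq (by omega) (by omega)]
  unfold Nat.dist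
  split_ifs <;> omega

/-- On every stretch of length at most `n`, one of the two waves shifted by a quarter period
has constant slope. -/
lemma le_max_dist_triangleWave (hn : 0 < n) (θ : ℤ) {k : ℕ} (hk : k ≤ n) :
    k ≤ max (Nat.dist (triangleWave n θ) (triangleWave n (θ + k)))
      (Nat.dist (triangleWave n (θ - n)) (triangleWave n (θ + k - n))) := by
  have := Int.emod_nonneg θ (b := 4 * n) (by omega)
  have := Int.emod_lt_of_pos θ (b := 4 * n) (by omega)
  rw [← triangleWave_emod n θ, sub_eq_add_neg, add_sub_assoc, triangleWave_add_eq_emod_add n θ,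
    triangleWave_add_eq_emod_add n θ, triangleWave_add_eq_emod_add n θ,
    triangleWave_eq (by omega) (by omega), triangleWave_eq (by omega) (by omega),
    triangleWave_eq (by omega) (by omega), triangleWave_eq (by omega) (by omega)]
  unfold Nat.dist
  split_ifs <;> omega

end TriangleWave

section LInftyDist

variable {ι : Type*} [Fintype ι]

def linftyDist (p q : ι → ℕ) : ℕ := Finset.univ.sup fun i => Nat.dist (p i) (q i)

lemma linftyDist_le_iff {p q : ι → ℕ} {k : ℕ} :
    linftyDist p q ≤ k ↔ ∀ i, Nat.dist (p i) (q i) ≤ k := by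
  simp [linftyDist]

lemma dist_le_linftyDist (p q : ι → ℕ) (i : ι) : Nat.dist (p i) (q i) ≤ linftyDist p q :=
  linftyDist_le_iff.1 le_rfl i

lemma linftyDist_comm (p q : ι → ℕ) : linftyDist p q = linftyDist q p := by
  simp only [linftyDist, Nat.dist_comm]

lemma linftyDist_triangle (p q r : ι → ℕ) :
    linftyDist p r ≤ linftyDist p q + linftyDist q r :=
  linftyDist_le_iff.2 fun i => (Nat.dist.triangle_inequality _ (q i) _).trans <|
    add_le_add (dist_le_linftyDist p q i) (dist_le_linftyDist q r i)

end LInftyDist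

namespace SimpleGraph

variable {G : SimpleGraph V}

lemma Walk.length_induce_s16 (s : Set V) {u v : V} (p : G.Walk u v) (hp : ∀ x ∈ p.support, x ∈ s) :
    (p.induce s hp).length = p.length := by
  induction p <;> simp_all

lemma exists_walk_of_adj_succ (g : ℕ → V) (hg : ∀ j, G.Adj (g j) (g (j + 1))) (k : ℕ) :
    ∃ p : G.Walk (g 0) (g k), p.length = k ∧ ∀ w ∈ p.support, ∃ j ≤ k, g j = w := by
  induction k with
  | zero => exact ⟨.nil, rfl, by simp⟩
  | succ k ih =>
    obtain ⟨p, hlen, hsupp⟩ := ih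
    refine ⟨p.concat (hg k), by simp [hlen], fun w hw => ?_⟩
    rcases List.mem_append.1 ((Walk.support_concat _ _).symm ▸ hw) with hw | hw
    · obtain ⟨j, hj, rfl⟩ := hsupp w hw
      exact ⟨j, by omega, rfl⟩
    · exact ⟨k + 1, le_rfl, (List.mem_singleton.1 hw).symm⟩

lemma dist_le_of_adj_succ (g : ℕ → V) (hg : ∀ j, G.Adj (g j) (g (j + 1))) (i k : ℕ) :
    G.dist (g i) (g (i + k)) ≤ k := by
  obtain ⟨p, hlen, -⟩ := exists_walk_of_adj_succ (fun j => g (i + j)) (fun j => hg (i + j)) k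
  simpa [hlen] using dist_le p

lemma Connected.exists_dist_le_and_dist_le (hG : G.Connected) {a b : V} {r₁ r₂ : ℕ}
    (h : G.dist a b ≤ r₁ + r₂) : ∃ w, G.dist a w ≤ r₁ ∧ G.dist w b ≤ r₂ := by
  obtain ⟨p, hp⟩ := hG.exists_walk_length_eq_dist a b
  refine ⟨p.getVert r₁, (dist_le (p.take r₁)).trans ?_, (dist_le (p.drop r₁)).trans ?_⟩
  · simp [Walk.take_length]
  · rw [Walk.drop_length]
    omega

lemma Connected.dist_dist_le (hG : G.Connected) (c a b : V) :
    Nat.dist (G.dist c a) (G.dist c b) ≤ G.dist a b := by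
  have := hG.dist_triangle (u := c) (v := a) (w := b)
  have := hG.dist_triangle (u := c) (v := b) (w := a)
  rw [dist_comm (u := b)] at this
  unfold Nat.dist
  omega

lemma Connected.dist_eq_of_dist_le (hG : G.Connected) {u v z : V} {t : ℕ}
    (ht : t ≤ G.dist u v) (hu : G.dist u z ≤ t) (hv : G.dist v z ≤ G.dist u v - t) :
    G.dist u z = t := by
  have := hG.dist_triangle (u := u) (v := z) (w := v)
  rw [dist_comm (u := z)] at this
  omega

end SimpleGraph

open SimpleGraph

lemma mem_gBall_natCast {G : SimpleGraph V} {c w : V} {r : ℕ} :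
    w ∈ gBall G c r ↔ G.dist c w ≤ r := by
  simp [gBall]

namespace HellyGraph

variable {G : SimpleGraph V}

lemma exists_forall_dist_le (hH : HellyGraph G) (hG : G.Connected) {ι : Type} (c : ι → V)
    (r : ι → ℕ) (h : ∀ i j, G.dist (c i) (c j) ≤ r i + r j) :
    ∃ z, ∀ i, G.dist (c i) z ≤ r i := by
  obtain ⟨z, hz⟩ := hH ι c r fun i j => by
    obtain ⟨w, hi, hj⟩ := hG.exists_dist_le_and_dist_le (h i j)
    exact ⟨w, mem_gBall_natCast.2 hi, mem_gBall_natCast.2 (by rwa [dist_comm])⟩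
  exact ⟨z, fun i => mem_gBall_natCast.1 (Set.mem_iInter.1 hz i)⟩

variable {ι : Type} [Fintype ι]

lemma exists_realization_extend (hH : HellyGraph G) (hG : G.Connected) (c : ι → V) {p : ι → ℕ}
    (hp : ∀ i j, G.dist (c i) (c j) ≤ p i + p j) {κ : Type} (z : κ → V) (q : κ → ι → ℕ)
    (hz : ∀ k i, G.dist (c i) (z k) ≤ q k i)
    (hzz : ∀ k l, G.dist (z k) (z l) ≤ linftyDist (q k) (q l)) :
    ∃ w, (∀ i, G.dist (c i) w ≤ p i) ∧ ∀ k, G.dist (z k) w ≤ linftyDist (q k) p := by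
  have hzc : ∀ k i, G.dist (c i) (z k) ≤ p i + linftyDist (q k) p := fun k i => by
    have := dist_le_linftyDist (q k) p i
    have := hz k i
    unfold Nat.dist at *
    omega
  obtain ⟨w, hw⟩ := hH.exists_forall_dist_le hG (Sum.elim c z)
    (Sum.elim p fun k => linftyDist (q k) p) <| by
      rintro (i | k) (j | l)
      · exact hp i j
      · exact hzc l i
      · rw [Sum.elim_inr, Sum.elim_inl, dist_comm, add_comm]
        exact hzc k j
      · refine (hzz k l).trans ?_
        simpa only [Sum.elim_inr, linftyDist_comm p] using linftyDist_triangle (q k) p (q l)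
  exact ⟨w, fun i => hw (.inl i), fun k => hw (.inr k)⟩

lemma exists_realization_finset (hH : HellyGraph G) (hG : G.Connected) (c : ι → V)
    (P : Finset (ι → ℕ)) (hP : ∀ p ∈ P, ∀ i j, G.dist (c i) (c j) ≤ p i + p j) :
    ∃ z : (ι → ℕ) → V, ∀ p ∈ P,
      (∀ i, G.dist (c i) (z p) ≤ p i) ∧ ∀ q ∈ P, G.dist (z p) (z q) ≤ linftyDist p q := by
  classical
  induction P using Finset.induction_on with
  | empty => exact ⟨fun _ => hG.nonempty.some, by simp⟩
  | @insert p P hpP ih =>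
    obtain ⟨z, hz⟩ := ih fun q hq => hP q (Finset.mem_insert_of_mem hq)
    obtain ⟨w, hwc, hwz⟩ := hH.exists_realization_extend hG c (hP p (Finset.mem_insert_self p P))
      (fun q : P => z q) (fun q => q) (fun q => (hz q q.2).1) (fun q r => (hz q q.2).2 r r.2)
    have hz' : ∀ q ∈ P, Function.update z p w q = z q := fun q hq =>
      Function.update_of_ne (ne_of_mem_of_not_mem hq hpP) _ _
    refine ⟨Function.update z p w, Finset.forall_mem_insert _ _ _ |>.2 ⟨?_, fun q hq => ?_⟩⟩
    · simp only [Function.update_self, Finset.forall_mem_insert, dist_self]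
      refine ⟨hwc, Nat.zero_le _, fun q hq => ?_⟩
      rw [hz' q hq, dist_comm, linftyDist_comm]
      exact hwz ⟨q, hq⟩
    · simp only [hz' q hq, Function.update_self, Finset.forall_mem_insert]
      exact ⟨(hz q hq).1, hwz ⟨q, hq⟩, fun r hr => hz' r hr ▸ (hz q hq).2 r hr⟩

lemma exists_realization (hH : HellyGraph G) (hG : G.Connected) (c : ι → V) {κ : Type*}
    (p : κ → ι → ℕ) (hp : (Set.range p).Finite)
    (hfeas : ∀ k i j, G.dist (c i) (c j) ≤ p k i + p k j) :
    ∃ Z : κ → V, (Set.range Z).Finite ∧ (∀ k i, G.dist (c i) (Z k) ≤ p k i) ∧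
      ∀ k l, G.dist (Z k) (Z l) ≤ linftyDist (p k) (p l) := by
  obtain ⟨z, hz⟩ := hH.exists_realization_finset hG c hp.toFinset <| by
    simpa using fun k => hfeas k
  have hzp : ∀ k, p k ∈ hp.toFinset := fun k => by simp
  refine ⟨z ∘ p, Set.range_comp z p ▸ hp.image z, fun k => (hz _ (hzp k)).1,
    fun k l => (hz _ (hzp k)).2 _ (hzp l)⟩

end HellyGraph

/-- Finiteness of the range stands in for periodicity: it provides a vertex that is last in the
dismantling order. -/
structure LocalGeodesicLoop (G : SimpleGraph V) (n : ℕ) where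
  toFun : ℤ → V
  finite_range : (Set.range toFun).Finite
  adj : ∀ θ, G.Adj (toFun θ) (toFun (θ + 1))
  le_dist : ∀ θ (k : ℕ), k ≤ n → k ≤ G.dist (toFun θ) (toFun (θ + k))

namespace LocalGeodesicLoop

variable {G : SimpleGraph V}

/-- The pair `(d(u, Z θ), d(x, Z θ))` runs around a tilted square of the `ℓ∞`-plane, on which
`ℓ∞`-distance is arc length up to scale `n`. -/
def ofTriangleWave (hG : G.Connected) {n : ℕ} (hn : 0 < n) {u x : V}
    {t₀ a₀ : ℕ} (Z : ℤ → V) (hfin : (Set.range Z).Finite)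
    (hu : ∀ θ, G.dist u (Z θ) = t₀ + triangleWave n θ)
    (hx : ∀ θ, G.dist x (Z θ) = a₀ + triangleWave n (θ - n))
    (hstep : ∀ θ, G.dist (Z θ) (Z (θ + 1)) ≤ 1) : LocalGeodesicLoop G n :=
  have le_dist : ∀ θ (k : ℕ), k ≤ n → k ≤ G.dist (Z θ) (Z (θ + k)) := fun θ k hk =>
    calc k ≤ max (Nat.dist (t₀ + triangleWave n θ) (t₀ + triangleWave n (θ + k)))
          (Nat.dist (a₀ + triangleWave n (θ - n)) (a₀ + triangleWave n (θ + k - n))) := by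
          simpa only [Nat.dist_add_add_left] using le_max_dist_triangleWave hn θ hk
      _ ≤ G.dist (Z θ) (Z (θ + k)) :=
        max_le (hu θ ▸ hu (θ + k) ▸ hG.dist_dist_le u _ _)
          (hx θ ▸ hx (θ + k) ▸ hG.dist_dist_le x _ _)
  { toFun := Z
    finite_range := hfin
    adj := fun θ => dist_eq_one_iff_adj.1 <|
      le_antisymm (hstep θ) (by simpa using le_dist θ 1 hn)
    le_dist := le_dist }

end LocalGeodesicLoop

namespace Dismantlable

variable {G : SimpleGraph V}

lemma dist_add_one_le_of_walk {s : ℕ} {u v : V} {X : Set V}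
    (hsub : gBallRemove G u v s ∩ X ⊆ gBall G u (s - 1)) (hv : v ≠ u) (g : ℕ → V)
    (hg : ∀ j, G.Adj (g j) (g (j + 1))) (hg₀ : g 0 = v) (hX : g s ∈ X) :
    G.dist u (g s) + 1 ≤ s := by
  by_cases hu : ∃ i ≤ s, g i = u
  · obtain ⟨i, his, rfl⟩ := hu
    have hi : i ≠ 0 := by rintro rfl; exact hv hg₀.symm
    have := dist_le_of_adj_succ g hg i (s - i)
    rw [Nat.add_sub_cancel' his] at this
    omega
  · push Not at hu
    subst hg₀
    obtain ⟨p, hlen, hsupp⟩ := exists_walk_of_adj_succ g hg s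
    have hp : ∀ w ∈ p.support, w ∈ {w | w ≠ u} := fun w hw => by
      obtain ⟨j, hj, rfl⟩ := hsupp w hw
      exact hu j hj
    have hmem : g s ∈ gBallRemove G u (g 0) s := ⟨_, _, ⟨p.induce _ hp⟩, by
      exact_mod_cast (dist_le _).trans (Walk.length_induce_s16 _ p hp ▸ hlen.le)⟩
    have : (G.dist u (g s) : ℝ) ≤ s - 1 := hsub ⟨hmem, hX⟩
    exact_mod_cast (by linarith : (G.dist u (g s) : ℝ) + 1 ≤ s)

theorem not_localGeodesicLoop (hG : G.Connected) {s n : ℕ} (hd : Dismantlable G s (s - 1))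
    (γ : LocalGeodesicLoop G n) (hn : 2 * s ≤ n) : False := by
  obtain ⟨lt, hwo, helim⟩ := hd
  let := IsWellOrder.linearOrder lt
  obtain ⟨_, ⟨θ₀, rfl⟩, hmax⟩ :=
    Set.exists_max_image _ id γ.finite_range ⟨_, Set.mem_range_self 0⟩
  have hX : ∀ θ, lt (γ.toFun θ) (γ.toFun θ₀) ∨ γ.toFun θ = γ.toFun θ₀ := fun θ =>
    (hmax _ (Set.mem_range_self θ)).lt_or_eq
  obtain ⟨u, hu, hsub⟩ :=
    helim (γ.toFun θ₀) ⟨_, (hX (θ₀ + 1)).resolve_right (γ.adj θ₀).ne'⟩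
  have hne : γ.toFun θ₀ ≠ u := by rintro rfl; exact irrefl _ hu
  have hfwd := dist_add_one_le_of_walk hsub hne (fun j => γ.toFun (θ₀ + j))
    (fun j => by simpa [add_assoc] using γ.adj (θ₀ + j)) (by simp) (hX _)
  have hbwd := dist_add_one_le_of_walk hsub hne (fun j => γ.toFun (θ₀ - j))
    (fun j => by convert (γ.adj (θ₀ - j - 1)).symm using 2 <;> push_cast <;> ring) (by simp)
    (hX _)
  have hgeo := γ.le_dist (θ₀ - s) (2 * s) hn
  rw [show θ₀ - s + ((2 * s : ℕ) : ℤ) = θ₀ + s by push_cast; ring] at hgeo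
  have := hG.dist_triangle (u := γ.toFun (θ₀ - s)) (v := u) (w := γ.toFun (θ₀ + s))
  rw [dist_comm (u := γ.toFun (θ₀ - s)) (v := u)] at this
  omega

end Dismantlable

section GeodesicPairProfile

variable {G : SimpleGraph V}

/-- The distances to `u, v, x, y` of a vertex at distance `t` from `u` on a geodesic to `v` and
at distance `a` from `x` on a geodesic to `y`. -/
noncomputable def geodesicPairProfile (G : SimpleGraph V) (u v x y : V) (t a : ℕ) : Fin 4 → ℕ :=
  ![t, G.dist u v - t, a, G.dist x y - a]

lemma geodesicPairProfile_feasible {u v x y : V} {t a : ℕ} (ht : t ≤ G.dist u v)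
    (ha : a ≤ G.dist x y) (hux : G.dist u x ≤ t + a) (huy : G.dist u y + a ≤ t + G.dist x y)
    (hvx : G.dist v x + t ≤ G.dist u v + a)
    (hvy : G.dist v y + t + a ≤ G.dist u v + G.dist x y) (i j : Fin 4) :
    G.dist (![u, v, x, y] i) (![u, v, x, y] j) ≤
      geodesicPairProfile G u v x y t a i + geodesicPairProfile G u v x y t a j := by
  have := dist_comm (G := G) (u := u) (v := v)
  have := dist_comm (G := G) (u := u) (v := x)
  have := dist_comm (G := G) (u := u) (v := y)
  have := dist_comm (G := G) (u := v) (v := x)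
  have := dist_comm (G := G) (u := v) (v := y)
  have := dist_comm (G := G) (u := x) (v := y)
  fin_cases i <;> fin_cases j <;> simp [geodesicPairProfile] <;> omega

lemma linftyDist_geodesicPairProfile_le {u v x y : V} {t t' a a' : ℕ} (ht : t ≤ G.dist u v)
    (ht' : t' ≤ G.dist u v) (ha : a ≤ G.dist x y) (ha' : a' ≤ G.dist x y) :
    linftyDist (geodesicPairProfile G u v x y t a) (geodesicPairProfile G u v x y t' a') ≤
      max (Nat.dist t t') (Nat.dist a a') := by
  refine linftyDist_le_iff.2 fun i => ?_
  fin_cases i <;> simp [geodesicPairProfile, Nat.dist] <;> omega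

end GeodesicPairProfile

theorem HellyGraph.nonempty_localGeodesicLoop {G : SimpleGraph V} (hH : HellyGraph G)
    (hG : G.Connected) {n : ℕ} (hn : 0 < n) {u v x y : V}
    (h₁ : G.dist u x + G.dist v y + 8 * n ≤ G.dist u v + G.dist x y)
    (h₂ : G.dist u y + G.dist v x + 8 * n ≤ G.dist u v + G.dist x y) :
    Nonempty (LocalGeodesicLoop G n) := by
  have := hG.dist_triangle (u := x) (v := u) (w := y)
  have := hG.dist_triangle (u := u) (v := x) (w := y)
  have := hG.dist_triangle (u := x) (v := v) (w := y)
  have := hG.dist_triangle (u := u) (v := y) (w := v)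
  rw [dist_comm (u := x) (v := u), dist_comm (u := x) (v := v), dist_comm (u := y) (v := v)] at *
  -- `t + a` ranges over `d(u,x) + [2n, 6n]` and `t - a` over `d(u,y) - d(x,y) + [0, 4n + 1]`,
  -- which `h₁` and `h₂` leave room for.
  obtain ⟨a₀, ha₀⟩ : ∃ a₀, a₀ = (G.dist u x + G.dist x y - G.dist u y) / 2 := ⟨_, rfl⟩
  obtain ⟨t₀, ht₀⟩ : ∃ t₀, t₀ = G.dist u x + 2 * n - a₀ := ⟨_, rfl⟩
  have hw := triangleWave_le hn
  have ht : ∀ θ, t₀ + triangleWave n θ ≤ G.dist u v := fun θ => by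
    have := hw θ; omega
  have ha : ∀ θ, a₀ + triangleWave n (θ - n) ≤ G.dist x y := fun θ => by
    have := hw (θ - n); omega
  obtain ⟨Z, hfin, hZc, hZZ⟩ := hH.exists_realization hG ![u, v, x, y]
    (fun θ => geodesicPairProfile G u v x y (t₀ + triangleWave n θ) (a₀ + triangleWave n (θ - n)))
    (((Set.finite_Iic (2 * n)).prod (Set.finite_Iic (2 * n))).image
      (fun p => geodesicPairProfile G u v x y (t₀ + p.1) (a₀ + p.2)) |>.subset <| by
        rintro _ ⟨θ, rfl⟩
        exact ⟨(_, _), ⟨hw θ, hw (θ - n)⟩, rfl⟩)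
    (fun θ => by
      have := hw θ; have := hw (θ - n)
      exact geodesicPairProfile_feasible (ht θ) (ha θ) (by omega) (by omega) (by omega) (by omega))
  refine ⟨.ofTriangleWave hG hn Z hfin (fun θ => hG.dist_eq_of_dist_le (ht θ) (hZc θ 0) (hZc θ 1))
    (fun θ => hG.dist_eq_of_dist_le (ha θ) (hZc θ 2) (hZc θ 3)) fun θ => ?_⟩
  refine (hZZ θ (θ + 1)).trans <| (linftyDist_geodesicPairProfile_le (ht _) (ht _) (ha _)
    (ha _)).trans <| max_le ?_ ?_
  · simpa only [Nat.dist_add_add_left] using dist_triangleWave_add_one_le hn θ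
  · simpa only [Nat.dist_add_add_left, sub_add_eq_add_sub] using
      dist_triangleWave_add_one_le hn (θ - n)

theorem statement16_general (V : Type*) (G : SimpleGraph V) (hG : G.Connected)
    (hH : HellyGraph G)
    (s : ℕ)
    (hd : Dismantlable G (s : ℝ) ((s : ℝ) - 1)) :
    IsHyperbolic G (64 * (s : ℝ) + 20) := by
  intro u v x y
  by_contra! h
  have gap : ∀ a : ℕ, (a : ℝ) < G.dist u v + G.dist x y - 2 * (64 * s + 20) →
      a + 8 * (2 * s + 1) ≤ G.dist u v + G.dist x y := fun a ha => by
    exact_mod_cast (by push_cast; linarith [s.cast_nonneg (α := ℝ)] :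
      ((a + 8 * (2 * s + 1) : ℕ) : ℝ) ≤ (G.dist u v + G.dist x y : ℕ))
  obtain ⟨h₁, h₂⟩ := max_lt_iff.1 (lt_sub_iff_add_lt.2 h)
  obtain ⟨γ⟩ := hH.nonempty_localGeodesicLoop hG (Nat.succ_pos (2 * s))
    (gap _ (by exact_mod_cast h₁)) (gap _ (by exact_mod_cast h₂))
  exact hd.not_localGeodesicLoop hG γ (Nat.le_succ _)

theorem statement16 (V : Type*) (G : SimpleGraph V) (hG : G.Connected)
    (hH : HellyGraph G)
    (s : ℕ) (hs : 1 ≤ s)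
    (hd : Dismantlable G (s : ℝ) ((s : ℝ) - 1)) :
    IsHyperbolic G (64 * (s : ℝ) + 20) :=
  statement16_general V G hG hH s hd
end
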